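/- arXiv:2211.02576 — 10 statements merged into one kernel-verified Lean document; each statement's English description precedes it below -/
import Mathlib

section
/- Let M be the additive submonoid of ℕ × ℕ consisting of all pairs (a, b) with a + b even. Then M is not a free commutative monoid: there is no type σ together with an additive monoid isomorphism M ≃+ Multiset σ. (Note that M is, up to isomorphism, the fiber product of the homomorphisms (+) : ℕ × ℕ →+ ℕ and n ↦ 2n : ℕ →+ ℕ, so pullbacks of free discrete commutative monoids need not be free.) -/
/-- The additive submonoid of `ℕ × ℕ` consisting of pairs `(a, b)` with `a + b` even. -/
def parityMonoid : AddSubmonoid (ℕ × ℕ) where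
  carrier := {p : ℕ × ℕ | Even (p.1 + p.2)}
  add_mem' := by
    intro a b ha hb
    simp only [Set.mem_setOf_eq, Prod.fst_add, Prod.snd_add, Nat.even_iff] at *
    omega
  zero_mem' := by simp

lemma singleton_of_indec {σ : Type} (s : Multiset σ) (hs : s ≠ 0)
    (h : ∀ t u : Multiset σ, t + u = s → t = 0 ∨ u = 0) : ∃ a, s = {a} := by
  obtain ⟨a, ha⟩ := Multiset.exists_mem_of_ne_zero hs
  obtain ⟨t, rfl⟩ := Multiset.exists_cons_of_mem ha
  rcases h {a} t (Multiset.singleton_add a t) with h1 | h1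
  · exact absurd h1 (Multiset.singleton_ne_zero a)
  · exact ⟨a, by simp [h1]⟩

lemma mem_parity (p : ℕ × ℕ) (h : (p.1 + p.2) % 2 = 0) : p ∈ parityMonoid := by
  simpa [parityMonoid, Nat.even_iff] using h

lemma parity_indec (p : ℕ × ℕ) (hp : p ∈ parityMonoid) (h2 : p.1 + p.2 = 2)
    (y z : parityMonoid) (hyz : y + z = ⟨p, hp⟩) : y = 0 ∨ z = 0 := by
  have hv := congrArg (Subtype.val) hyz
  have h1 := congrArg Prod.fst hv
  have h2' := congrArg Prod.snd hv
  simp only [AddSubmonoid.coe_add, Prod.fst_add, Prod.snd_add] at h1 h2'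
  have hy : (y.1.1 + y.1.2) % 2 = 0 := Nat.even_iff.mp y.2
  have hz : (z.1.1 + z.1.2) % 2 = 0 := Nat.even_iff.mp z.2
  have : (y.1.1 = 0 ∧ y.1.2 = 0) ∨ (z.1.1 = 0 ∧ z.1.2 = 0) := by omega
  rcases this with ⟨ha, hb⟩ | ⟨ha, hb⟩
  · left; exact Subtype.ext (Prod.ext ha hb)
  · right; exact Subtype.ext (Prod.ext ha hb)

/-- `parityMonoid` is not a free commutative monoid: there is no type `σ` together with
an additive monoid isomorphism `parityMonoid ≃+ Multiset σ`. -/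
theorem parityMonoid_not_free :
    ¬ ∃ σ : Type, Nonempty (parityMonoid ≃+ Multiset σ) := by
  rintro ⟨σ, ⟨e⟩⟩
  have key : ∀ (p : ℕ × ℕ) (hp : p ∈ parityMonoid), p.1 + p.2 = 2 →
      ∃ a, e ⟨p, hp⟩ = {a} := by
    intro p hp h2
    apply singleton_of_indec
    · intro h0
      have : (⟨p, hp⟩ : parityMonoid) = 0 := by
        have := congrArg e.symm h0
        simpa using this
      have := congrArg (fun q => q.1.1 + q.1.2) this
      simp [h2] at this
    · intro t u htu
      have : e.symm t + e.symm u = ⟨p, hp⟩ := by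
        rw [← map_add]; simp [htu]
      rcases parity_indec p hp h2 _ _ this with h | h
      · left
        have := congrArg e h
        simpa using this
      · right
        have := congrArg e h
        simpa using this
  obtain ⟨a, ha⟩ := key (1,1) (mem_parity _ rfl) rfl
  obtain ⟨b, hb⟩ := key (2,0) (mem_parity _ rfl) rfl
  obtain ⟨c, hc⟩ := key (0,2) (mem_parity _ rfl) rfl
  have hrel : (⟨(1,1), mem_parity _ rfl⟩ : parityMonoid) + ⟨(1,1), mem_parity _ rfl⟩
      = ⟨(2,0), mem_parity _ rfl⟩ + ⟨(0,2), mem_parity _ rfl⟩ := by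
    apply Subtype.ext; rfl
  have hmul := congrArg e hrel
  rw [map_add, map_add, ha, hb, hc] at hmul
  have hbmem : b ∈ ({a} + {a} : Multiset σ) := by rw [hmul]; simp
  have hcmem : c ∈ ({a} + {a} : Multiset σ) := by rw [hmul]; simp
  simp only [Multiset.mem_add, Multiset.mem_singleton] at hbmem hcmem
  have hb' : b = a := by tauto
  have hc' : c = a := by tauto
  have : e ⟨(2,0), mem_parity _ rfl⟩ = e ⟨(0,2), mem_parity _ rfl⟩ := by
    rw [hb, hc, hb', hc']
  have := e.injective this
  have := congrArg (fun q => q.1.1) this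
  simp at this
end

section
/- Let α and β be types and φ : Multiset α ≃+ Multiset β an additive monoid isomorphism. Then φ carries singleton multisets to singleton multisets; more precisely, there is an equivalence e : α ≃ β such that φ {a} = {e a} for every a : α. -/
private lemma multiset_indec_singleton {γ : Type*} (s : Multiset γ) (h0 : s ≠ 0)
    (h : ∀ t u : Multiset γ, s = t + u → t = 0 ∨ u = 0) : ∃ b, s = {b} := by
  obtain ⟨a, ha⟩ := Multiset.exists_mem_of_ne_zero h0
  obtain ⟨t, ht⟩ := Multiset.exists_cons_of_mem ha
  have hs : s = {a} + t := by rw [Multiset.singleton_add]; exact ht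
  rcases h _ _ hs with h1 | h2
  · simp at h1
  · exact ⟨a, by rw [hs, h2, add_zero]⟩

private lemma multiset_equiv_sing {α β : Type*} (φ : Multiset α ≃+ Multiset β) (a : α) :
    ∃ b, φ {a} = {b} := by
  apply multiset_indec_singleton
  · intro h
    have := φ.injective (h.trans φ.map_zero.symm)
    simp at this
  · intro t u htu
    have : ({a} : Multiset α) = φ.symm t + φ.symm u := by
      rw [← map_add]
      have := congrArg φ.symm htu
      rwa [φ.symm_apply_apply] at this
    have h1 : φ.symm t = 0 ∨ φ.symm u = 0 := by
      by_cases ht : φ.symm t = 0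
      · exact Or.inl ht
      · obtain ⟨x, hx⟩ := Multiset.exists_mem_of_ne_zero ht
        by_cases hu : φ.symm u = 0
        · exact Or.inr hu
        · obtain ⟨y, hy⟩ := Multiset.exists_mem_of_ne_zero hu
          exfalso
          have hcard : (({a} : Multiset α)).card = (φ.symm t).card + (φ.symm u).card := by
            rw [this, Multiset.card_add]
          simp only [Multiset.card_singleton] at hcard
          have h1 := Multiset.card_pos_iff_exists_mem.2 ⟨x, hx⟩
          have h2 := Multiset.card_pos_iff_exists_mem.2 ⟨y, hy⟩
          omega
    rcases h1 with h | h
    · exact Or.inl (by simpa using congrArg φ h)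
    · exact Or.inr (by simpa using congrArg φ h)

/-- Any additive monoid isomorphism between free commutative monoids `Multiset α ≃+ Multiset β`
carries singletons to singletons: it is induced by an equivalence `α ≃ β` of the generators. -/
theorem multiset_addEquiv_singletons {α β : Type*} (φ : Multiset α ≃+ Multiset β) :
    ∃ e : α ≃ β, ∀ a : α, φ {a} = {e a} := by
  choose f hf using multiset_equiv_sing φ
  choose g hg using multiset_equiv_sing φ.symm
  refine ⟨⟨f, g, ?_, ?_⟩, hf⟩
  · intro a
    have : ({g (f a)} : Multiset α) = {a} := by
      rw [← hg (f a), ← hf a, φ.symm_apply_apply]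
    simpa using this
  · intro b
    have : ({f (g b)} : Multiset β) = {b} := by
      rw [← hf (g b), ← hg b, φ.apply_symm_apply]
    simpa using this
end

section
/- Let N be a commutative additive monoid and M an additive submonoid of N. The inclusion homomorphism M →+ N is equifibered if and only if M is closed under factoring, i.e. for all x y : N with x + y ∈ M one has x ∈ M and y ∈ M. -/
/-- A homomorphism `f : M →+ N` of commutative additive monoids is *equifibered* if for all
`n₁ n₂ : N` and `m : M` with `f m = n₁ + n₂` there is exactly one pair `(m₁, m₂)` with
`f m₁ = n₁`, `f m₂ = n₂` and `m₁ + m₂ = m`. -/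
def Equifibered {M N : Type*} [AddCommMonoid M] [AddCommMonoid N] (f : M →+ N) : Prop :=
  ∀ (n₁ n₂ : N) (m : M), f m = n₁ + n₂ →
    ∃! p : M × M, f p.1 = n₁ ∧ f p.2 = n₂ ∧ p.1 + p.2 = m

/-- The inclusion of an additive submonoid `M ≤ N` is equifibered if and only if `M` is
closed under factoring: whenever `x + y ∈ M`, both `x ∈ M` and `y ∈ M`. -/
theorem subtype_equifibered_iff_closed_under_factoring
    {N : Type*} [AddCommMonoid N] (M : AddSubmonoid N) :
    Equifibered M.subtype ↔ ∀ x y : N, x + y ∈ M → x ∈ M ∧ y ∈ M := by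
  constructor
  · intro h x y hxy
    obtain ⟨⟨p1, p2⟩, ⟨h1, h2, -⟩, -⟩ := h x y ⟨x + y, hxy⟩ rfl
    exact ⟨h1 ▸ p1.2, h2 ▸ p2.2⟩
  · intro h n₁ n₂ m hm
    obtain ⟨h1, h2⟩ := h n₁ n₂ (hm ▸ m.2)
    refine ⟨(⟨n₁, h1⟩, ⟨n₂, h2⟩), ⟨rfl, rfl, Subtype.ext hm.symm⟩, ?_⟩
    rintro ⟨q1, q2⟩ ⟨hq1, hq2, -⟩
    simp only [Prod.mk.injEq]
    exact ⟨Subtype.ext hq1, Subtype.ext hq2⟩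
end

section
/- Let M be a commutative additive monoid, G an additive commutative group, and f : M →+ G an equifibered homomorphism. Then f is bijective, hence an isomorphism of monoids. -/
/-- An equifibered homomorphism from a commutative monoid into a commutative group is
bijective, hence an isomorphism of monoids. -/
theorem equifibered_into_group_bijective
    {M G : Type*} [AddCommMonoid M] [AddCommGroup G] (f : M →+ G)
    (hf : Equifibered f) : Function.Bijective f := by
  constructor
  · intro a b hab
    obtain ⟨p, -, hu⟩ := hf (f a) (f a) (a + b) (by rw [map_add, hab])
    have h1 := hu (a, b) ⟨rfl, hab.symm, rfl⟩
    have h2 := hu (b, a) ⟨hab.symm, rfl, add_comm b a⟩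
    exact congrArg Prod.fst (h1.trans h2.symm)
  · intro g
    obtain ⟨p, ⟨hp1, -, -⟩, -⟩ := hf g (-g) 0 (by simp)
    exact ⟨p.1, hp1⟩
end

section
/- Let f₂ : M₂ →+ N₂ and g : N₁ →+ N₂ be homomorphisms of commutative additive monoids, let P = {(n, m) : N₁ × M₂ // g n = f₂ m} be the fiber-product submonoid of N₁ × M₂, and let f₁ : P →+ N₁ be the first projection. If f₂ is equifibered then f₁ is equifibered; conversely, if f₁ is equifibered and g is surjective, then f₂ is equifibered. -/
/-- The fiber-product submonoid `N₁ ×_{N₂} M₂ = {(n, m) | g n = f₂ m}` of `N₁ × M₂`. -/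
def fiberProduct {N₁ M₂ N₂ : Type*} [AddCommMonoid N₁] [AddCommMonoid M₂] [AddCommMonoid N₂]
    (g : N₁ →+ N₂) (f₂ : M₂ →+ N₂) : AddSubmonoid (N₁ × M₂) where
  carrier := {p : N₁ × M₂ | g p.1 = f₂ p.2}
  add_mem' := by
    intro a b ha hb
    simp only [Set.mem_setOf_eq, Prod.fst_add, Prod.snd_add, map_add] at *
    rw [ha, hb]
  zero_mem' := by simp

/-- Base change for equifibered maps: the projection `f₁ : N₁ ×_{N₂} M₂ →+ N₁` of the pullback
of an equifibered `f₂ : M₂ →+ N₂` along `g : N₁ →+ N₂` is equifibered; conversely, if `f₁` is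
equifibered and `g` is surjective, then `f₂` is equifibered. -/
theorem equifibered_base_change
    {N₁ M₂ N₂ : Type*} [AddCommMonoid N₁] [AddCommMonoid M₂] [AddCommMonoid N₂]
    (g : N₁ →+ N₂) (f₂ : M₂ →+ N₂) :
    (Equifibered f₂ →
      Equifibered ((AddMonoidHom.fst N₁ M₂).comp (fiberProduct g f₂).subtype)) ∧
    (Equifibered ((AddMonoidHom.fst N₁ M₂).comp (fiberProduct g f₂).subtype) →
      Function.Surjective g → Equifibered f₂) := by
  constructor
  · intro hf₂ n₁ n₂ p hp
    simp only [AddMonoidHom.comp_apply, AddSubmonoid.coe_subtype, AddMonoidHom.coe_fst] at hp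
    have hmem : g (p : N₁ × M₂).1 = f₂ (p : N₁ × M₂).2 := p.2
    have h : f₂ (p : N₁ × M₂).2 = g n₁ + g n₂ := by rw [← hmem, hp, map_add]
    obtain ⟨⟨m₁, m₂⟩, ⟨hm₁, hm₂, hsum⟩, huniq⟩ := hf₂ (g n₁) (g n₂) _ h
    refine ⟨(⟨(n₁, m₁), hm₁.symm⟩, ⟨(n₂, m₂), hm₂.symm⟩), ⟨rfl, rfl, ?_⟩, ?_⟩
    · ext
      · exact hp.symm
      · exact hsum
    · rintro ⟨q₁, q₂⟩ ⟨hq₁, hq₂, hqsum⟩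
      simp only [AddMonoidHom.comp_apply, AddSubmonoid.coe_subtype,
        AddMonoidHom.coe_fst] at hq₁ hq₂
      have h12 : ((q₁ : N₁ × M₂).2, (q₂ : N₁ × M₂).2) = (m₁, m₂) := by
        refine huniq _ ⟨?_, ?_, ?_⟩
        · rw [← q₁.2, hq₁]
        · rw [← q₂.2, hq₂]
        · have := congrArg (fun x : (fiberProduct g f₂) => (x : N₁ × M₂).2) hqsum
          simpa using this
      have e1 := congrArg Prod.fst h12
      have e2 := congrArg Prod.snd h12
      simp only at e1 e2
      ext
      · exact hq₁
      · exact e1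
      · exact hq₂
      · exact e2
  · intro hf₁ hg n₁ n₂ m hm
    obtain ⟨k₁, hk₁⟩ := hg n₁
    obtain ⟨k₂, hk₂⟩ := hg n₂
    have hpmem : g (k₁ + k₂) = f₂ m := by rw [map_add, hk₁, hk₂, hm]
    set p : (fiberProduct g f₂) := ⟨(k₁ + k₂, m), hpmem⟩ with hp
    obtain ⟨⟨q₁, q₂⟩, ⟨hq₁, hq₂, hqsum⟩, huniq⟩ := hf₁ k₁ k₂ p rfl
    simp only [AddMonoidHom.comp_apply, AddSubmonoid.coe_subtype,
      AddMonoidHom.coe_fst] at hq₁ hq₂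
    have hsum2 : (q₁ : N₁ × M₂).2 + (q₂ : N₁ × M₂).2 = m := by
      have := congrArg (fun x : (fiberProduct g f₂) => (x : N₁ × M₂).2) hqsum
      simpa using this
    refine ⟨((q₁ : N₁ × M₂).2, (q₂ : N₁ × M₂).2), ⟨?_, ?_, hsum2⟩, ?_⟩
    · rw [← q₁.2, hq₁, hk₁]
    · rw [← q₂.2, hq₂, hk₂]
    · rintro ⟨m₁', m₂'⟩ ⟨hm₁', hm₂', hsum'⟩
      simp only at hm₁' hm₂' hsum'
      have hmem1 : g k₁ = f₂ m₁' := by rw [hk₁, hm₁']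
      have hmem2 : g k₂ = f₂ m₂' := by rw [hk₂, hm₂']
      have key : ((⟨(k₁, m₁'), hmem1⟩ : (fiberProduct g f₂)), (⟨(k₂, m₂'), hmem2⟩ : (fiberProduct g f₂))) = (q₁, q₂) := by
        refine huniq _ ⟨rfl, rfl, ?_⟩
        ext
        · rfl
        · exact hsum'
      have e1 := congrArg (fun x => ((x.1 : N₁ × M₂).2, (x.2 : N₁ × M₂).2)) key
      simpa using e1
end

section
/- A homomorphism f : M →+ N of commutative additive monoids is equifibered if and only if for every list l : List N and every m : M with f m = l.sum there is exactly one list l' : List M with l'.map f = l and l'.sum = m. (In particular, if f is equifibered then f m = 0 implies m = 0.) -/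
theorem Equifibered.zero {M N : Type*} [AddCommMonoid M] [AddCommMonoid N] {f : M →+ N}
    (hf : Equifibered f) {m : M} (hm : f m = 0) : m = 0 := by
  obtain ⟨p, hp, hu⟩ := hf 0 0 m (by simp [hm])
  have h1 := hu (0, m) (by simp [hm])
  have h2 := hu (m, 0) (by simp [hm])
  have := h1.trans h2.symm
  simpa using (congrArg Prod.fst this).symm

/-- `f` is equifibered if and only if all of the `n`-fold addition squares are pullbacks:
for every list `l` of elements of `N` and every `m : M` with `f m = l.sum`, there is exactly
one list `l'` of elements of `M` with `l'.map f = l ∧ l'.sum = m`. -/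
theorem equifibered_iff_list_lifting
    {M N : Type*} [AddCommMonoid M] [AddCommMonoid N] (f : M →+ N) :
    Equifibered f ↔
      ∀ (l : List N) (m : M), f m = l.sum →
        ∃! l' : List M, l'.map f = l ∧ l'.sum = m := by
  constructor
  · intro hf l
    induction l with
    | nil =>
      intro m hm
      refine ⟨[], ⟨rfl, (hf.zero (by simpa using hm)).symm⟩, ?_⟩
      rintro l' ⟨hmap, -⟩
      exact List.map_eq_nil_iff.mp hmap
    | cons n ns ih =>
      intro m hm
      obtain ⟨⟨m₁, m₂⟩, ⟨h1, h2, h3⟩, hu⟩ := hf n ns.sum m (by simpa using hm)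
      obtain ⟨t, ⟨ht1, ht2⟩, htu⟩ := ih m₂ h2
      refine ⟨m₁ :: t, ⟨by simp [ht1, h1], by simp [ht2, h3]⟩, ?_⟩
      rintro l' ⟨hmap, hsum⟩
      cases l' with
      | nil => simp at hmap
      | cons a s =>
        simp only [List.map_cons, List.cons.injEq] at hmap
        have hfs : f s.sum = ns.sum := by
          rw [← hmap.2]; exact map_list_sum f s
        have hpair := hu (a, s.sum)
          ⟨hmap.1, hfs, by simpa using hsum⟩
        have ha : a = m₁ := congrArg Prod.fst hpair
        have hs : s.sum = m₂ := congrArg Prod.snd hpair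
        have := htu s ⟨hmap.2, hs⟩
        rw [ha, this]
  · intro h n₁ n₂ m hm
    obtain ⟨l', ⟨hmap, hsum⟩, hu⟩ := h [n₁, n₂] m (by simpa using hm)
    match l', hmap with
    | [a, b], hmap =>
      simp only [List.map_cons, List.map_nil, List.cons.injEq, and_true] at hmap
      refine ⟨(a, b), ⟨hmap.1, hmap.2, by simpa using hsum⟩, ?_⟩
      rintro ⟨x, y⟩ ⟨hx, hy, hxy⟩
      have := hu [x, y] ⟨by simp [hx, hy], by simpa using hxy⟩
      simp only [List.cons.injEq, and_true] at this
      exact Prod.ext this.1 this.2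
end

section
/- Let f : M →+ N be an equifibered homomorphism of commutative additive monoids. Then the map Multiset M → {(t, m) : Multiset N × M // t.sum = f m} sending s to (s.map f, s.sum) is a bijection; i.e. the square relating the sum maps Multiset M → M and Multiset N → N with Multiset.map f and f is a pullback of types. -/
private lemma equifibered_key {M N : Type*} [AddCommMonoid M] [AddCommMonoid N]
    (f : M →+ N) (hf : Equifibered f) :
    ∀ (t : Multiset N) (m : M), t.sum = f m →
      ∃! s : Multiset M, s.map f = t ∧ s.sum = m := by
  classical
  intro t
  induction t using Multiset.induction with
  | empty =>
    intro m hm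
    have hm0 : f m = 0 := by simpa using hm.symm
    obtain ⟨p, hp, hu⟩ := hf 0 0 m (by simp [hm0])
    have h1 : ((0 : M), m) = p := hu (0, m) (by simp [hm0])
    have h2 : (m, (0 : M)) = p := hu (m, 0) (by simp [hm0])
    have hm' : m = 0 := by
      have := h1.trans h2.symm
      exact (Prod.mk.injEq _ _ _ _ ▸ this).2
    refine ⟨0, by simp [hm'], ?_⟩
    rintro s ⟨hs1, hs2⟩
    exact Multiset.map_eq_zero.mp hs1
  | cons n t ih =>
    intro m hm
    obtain ⟨p, ⟨hp1, hp2, hp3⟩, hu⟩ := hf n t.sum m (by simpa using hm.symm)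
    obtain ⟨s', ⟨hs'1, hs'2⟩, hu'⟩ := ih p.2 hp2.symm
    refine ⟨p.1 ::ₘ s', by simp [hs'1, hs'2, hp1, hp3], ?_⟩
    rintro s ⟨hs1, hs2⟩
    obtain ⟨a, ha, hfa, hmap⟩ := (Multiset.map_eq_cons f s t n).mpr hs1
    have hpair : (a, (s.erase a).sum) = p := by
      refine hu _ ⟨hfa, ?_, ?_⟩
      · dsimp only; rw [map_multiset_sum, hmap]
      · dsimp only; rw [← hs2, ← Multiset.sum_cons, Multiset.cons_erase ha]
    have ha1 : a = p.1 := congrArg Prod.fst hpair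
    have ha2 : (s.erase a).sum = p.2 := congrArg Prod.snd hpair
    have herase : s.erase a = s' := hu' _ ⟨hmap, ha2⟩
    rw [← Multiset.cons_erase ha, herase, ha1]

/-- If `f : M →+ N` is equifibered then the square relating the counits (sum maps)
`Multiset M → M` and `Multiset N → N` with `Multiset.map f` and `f` is a pullback of
types: the map `s ↦ (s.map f, s.sum)` is a bijection onto the fiber product
`{(t, m) | t.sum = f m}`. -/
theorem equifibered_free_square_pullback
    {M N : Type*} [AddCommMonoid M] [AddCommMonoid N] (f : M →+ N)
    (hf : Equifibered f) :
    Function.Bijective (fun s : Multiset M =>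
      (⟨(s.map f, s.sum), (map_multiset_sum f s).symm⟩ :
        {p : Multiset N × M // p.1.sum = f p.2})) := by
  constructor
  · intro s₁ s₂ h
    have h' := Subtype.ext_iff.mp h
    have h1 : s₁.map f = s₂.map f := congrArg (Prod.fst ∘ Subtype.val) h
    have h2 : s₁.sum = s₂.sum := congrArg (Prod.snd ∘ Subtype.val) h
    obtain ⟨s, hs, hu⟩ := equifibered_key f hf (s₁.map f) s₁.sum
      (map_multiset_sum f s₁).symm
    exact (hu s₁ ⟨rfl, rfl⟩).trans (hu s₂ ⟨h1.symm, h2.symm⟩).symm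
  · rintro ⟨⟨t, m⟩, h⟩
    obtain ⟨s, ⟨hs1, hs2⟩, -⟩ := equifibered_key f hf t m h
    exact ⟨s, Subtype.ext (Prod.ext hs1 hs2)⟩
end

section
/- A homomorphism f : M →+ N of commutative additive monoids is equifibered if and only if it is right orthogonal to the diagonal Δ : ℕ →+ ℕ × ℕ, n ↦ (n, n): for all homomorphisms u : ℕ →+ M and v : ℕ × ℕ →+ N with f.comp u = v.comp Δ, there is exactly one homomorphism w : ℕ × ℕ →+ M with w.comp Δ = u and f.comp w = v. -/
/-- The diagonal homomorphism `ℕ →+ ℕ × ℕ`, `n ↦ (n, n)`; here `ℕ` is the free commutative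
monoid on one generator. -/
def natDiag : ℕ →+ ℕ × ℕ := (AddMonoidHom.id ℕ).prod (AddMonoidHom.id ℕ)

/-- Homomorphisms on `ℕ × ℕ` are determined by their values on the generators. -/
lemma prodNat_hom_ext {M : Type*} [AddCommMonoid M] {w w' : ℕ × ℕ →+ M}
    (h1 : w (1, 0) = w' (1, 0)) (h2 : w (0, 1) = w' (0, 1)) : w = w' := by
  refine AddMonoidHom.ext fun ⟨a, b⟩ => ?_
  have h : ((a, b) : ℕ × ℕ) = a • ((1 : ℕ), (0 : ℕ)) + b • ((0 : ℕ), (1 : ℕ)) := by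
    simp [Prod.ext_iff]
  rw [h, map_add, map_add, map_nsmul, map_nsmul, map_nsmul, map_nsmul, h1, h2]

/-- The homomorphism `ℕ × ℕ →+ M` sending `(a, b)` to `a • x + b • y`. -/
def pairHom {M : Type*} [AddCommMonoid M] (x y : M) : ℕ × ℕ →+ M :=
  ((multiplesHom M x).comp (AddMonoidHom.fst ℕ ℕ)) +
    ((multiplesHom M y).comp (AddMonoidHom.snd ℕ ℕ))

@[simp] lemma pairHom_apply {M : Type*} [AddCommMonoid M] (x y : M) (a b : ℕ) :
    pairHom x y (a, b) = a • x + b • y := rfl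

@[simp] lemma natDiag_one : natDiag 1 = 1 := rfl

@[simp] lemma pairHom_one {M : Type*} [AddCommMonoid M] (x y : M) :
    pairHom x y 1 = x + y := by
  have h : (1 : ℕ × ℕ) = (1, 1) := rfl
  rw [h, pairHom_apply, one_smul, one_smul]

/-- A homomorphism of commutative monoids is equifibered if and only if it is right orthogonal
to the diagonal `Δ : ℕ →+ ℕ × ℕ`: every commuting square from `Δ` to `f` admits a unique
diagonal filler. -/
theorem equifibered_iff_rightOrthogonal_diag
    {M N : Type*} [AddCommMonoid M] [AddCommMonoid N] (f : M →+ N) :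
    Equifibered f ↔
      ∀ (u : ℕ →+ M) (v : ℕ × ℕ →+ N), f.comp u = v.comp natDiag →
        ∃! w : ℕ × ℕ →+ M, w.comp natDiag = u ∧ f.comp w = v := by
  constructor
  · intro hf u v hcomm
    have hcv : f (u 1) = v (1, 0) + v (0, 1) := by
      have h1 := congrFun (congrArg DFunLike.coe hcomm) 1
      simp only [AddMonoidHom.comp_apply] at h1
      rw [h1, ← map_add]
      norm_num [natDiag, Prod.ext_iff]
    obtain ⟨⟨m₁, m₂⟩, ⟨h1, h2, h3⟩, huniq⟩ := hf (v (1, 0)) (v (0, 1)) (u 1) hcv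
    refine ⟨pairHom m₁ m₂, ⟨?_, ?_⟩, ?_⟩
    · ext
      simpa using h3
    · refine prodNat_hom_ext ?_ ?_ <;> simp [h1, h2]
    · rintro w' ⟨hw1, hw2⟩
      have hp1 : f (w' (1, 0)) = v (1, 0) := congrFun (congrArg DFunLike.coe hw2) (1, 0)
      have hp2 : f (w' (0, 1)) = v (0, 1) := congrFun (congrArg DFunLike.coe hw2) (0, 1)
      have hp3 : w' (1, 0) + w' (0, 1) = u 1 := by
        have := congrFun (congrArg DFunLike.coe hw1) 1
        simp only [AddMonoidHom.comp_apply] at this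
        rw [← this, ← map_add]
        norm_num [natDiag, Prod.ext_iff]
      have heq := huniq (w' (1, 0), w' (0, 1)) ⟨hp1, hp2, hp3⟩
      refine prodNat_hom_ext ?_ ?_ <;> simp [Prod.ext_iff] at heq ⊢ <;> tauto
  · intro H n₁ n₂ m hm
    have hcomm : f.comp (multiplesHom M m) = (pairHom n₁ n₂).comp natDiag := by
      ext
      simp [hm]
    obtain ⟨w, ⟨hw1, hw2⟩, hwuniq⟩ := H (multiplesHom M m) (pairHom n₁ n₂) hcomm
    have e1 : f (w (1, 0)) = n₁ := by
      have := congrFun (congrArg DFunLike.coe hw2) (1, 0); simpa using this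
    have e2 : f (w (0, 1)) = n₂ := by
      have := congrFun (congrArg DFunLike.coe hw2) (0, 1); simpa using this
    have e3 : w (1, 0) + w (0, 1) = m := by
      have := congrFun (congrArg DFunLike.coe hw1) 1
      simp only [AddMonoidHom.comp_apply] at this
      have h11 : natDiag 1 = ((1 : ℕ), (0 : ℕ)) + ((0 : ℕ), (1 : ℕ)) := rfl
      rw [h11, map_add] at this
      simpa using this
    refine ⟨(w (1, 0), w (0, 1)), ⟨e1, e2, e3⟩, ?_⟩
    rintro ⟨q₁, q₂⟩ ⟨hq1, hq2, hq3⟩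
    have hw' : pairHom q₁ q₂ = w := by
      apply hwuniq
      constructor
      · ext
        simpa using hq3
      · refine prodNat_hom_ext ?_ ?_ <;> simp [hq1, hq2]
    have g1 : q₁ = w (1, 0) := by
      have := congrFun (congrArg DFunLike.coe hw') (1, 0); simpa using this
    have g2 : q₂ = w (0, 1) := by
      have := congrFun (congrArg DFunLike.coe hw') (0, 1); simpa using this
    simp [g1, g2]
end

section
/- Let α be a type and M an additive submonoid of Multiset α. Then M is closed under factoring (for all s t : Multiset α, s + t ∈ M implies s ∈ M and t ∈ M) if and only if there is a set B ⊆ α such that M consists exactly of the multisets all of whose elements lie in B. Consequently, factoring-closed additive submonoids of Multiset α are in inclusion-preserving bijection with subsets of α. -/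
private def msub {α : Type*} (B : Set α) : AddSubmonoid (Multiset α) where
  carrier := {s | ∀ a ∈ s, a ∈ B}
  zero_mem' := by simp
  add_mem' := by
    intro s t hs ht a ha
    rcases Multiset.mem_add.1 ha with h | h
    · exact hs a h
    · exact ht a h

private theorem key {α : Type*} (M : AddSubmonoid (Multiset α))
    (h : ∀ s t : Multiset α, s + t ∈ M → s ∈ M ∧ t ∈ M) (s : Multiset α) :
    s ∈ M ↔ ∀ a ∈ s, ({a} : Multiset α) ∈ M := by
  classical
  constructor
  · intro hs a ha
    have : ({a} : Multiset α) + s.erase a ∈ M := by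
      rwa [Multiset.singleton_add, Multiset.cons_erase ha]
    exact (h _ _ this).1
  · intro hs
    induction s using Multiset.induction with
    | empty => exact M.zero_mem
    | cons a t ih =>
      have : ({a} : Multiset α) + t ∈ M :=
        M.add_mem (hs a (by simp)) (ih fun b hb => hs b (by simp [hb]))
      rwa [Multiset.singleton_add] at this

private theorem fwd {α : Type*} (M : AddSubmonoid (Multiset α)) :
    (∀ s t : Multiset α, s + t ∈ M → s ∈ M ∧ t ∈ M) ↔
      ∃ B : Set α, ∀ s : Multiset α, s ∈ M ↔ ∀ a ∈ s, a ∈ B := by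
  constructor
  · intro h
    exact ⟨{a | ({a} : Multiset α) ∈ M}, key M h⟩
  · rintro ⟨B, hB⟩ s t hst
    rw [hB] at hst
    exact ⟨(hB s).2 fun a ha => hst a (Multiset.mem_add.2 (Or.inl ha)),
      (hB t).2 fun a ha => hst a (Multiset.mem_add.2 (Or.inr ha))⟩

/-- An additive submonoid `M` of the free commutative monoid `Multiset α` is closed under
factoring (`s + t ∈ M → s ∈ M ∧ t ∈ M`) if and only if it consists exactly of the multisets
all of whose elements lie in some subset `B ⊆ α`.  Consequently, factoring-closed submonoids
of `Multiset α` are in inclusion-preserving bijection with subsets of `α`. -/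
theorem factoringClosed_addSubmonoid_multiset_classification {α : Type*} :
    (∀ M : AddSubmonoid (Multiset α),
      (∀ s t : Multiset α, s + t ∈ M → s ∈ M ∧ t ∈ M) ↔
        ∃ B : Set α, ∀ s : Multiset α, s ∈ M ↔ ∀ a ∈ s, a ∈ B) ∧
    Nonempty
      ({M : AddSubmonoid (Multiset α) // ∀ s t : Multiset α, s + t ∈ M → s ∈ M ∧ t ∈ M}
        ≃o Set α) := by
  refine ⟨fwd, ⟨?_⟩⟩
  refine
    { toFun := fun M => {a | ({a} : Multiset α) ∈ M.1}
      invFun := fun B => ⟨msub B, (fwd _).2 ⟨B, fun _ => Iff.rfl⟩⟩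
      left_inv := ?_
      right_inv := ?_
      map_rel_iff' := ?_ }
  · rintro ⟨M, hM⟩
    ext s
    exact (Iff.symm (key M hM s))
  · intro B
    ext a
    simp [msub]
  · rintro ⟨M, hM⟩ ⟨N, hN⟩
    constructor
    · intro h s hs
      exact (key N hN s).2 fun a ha => h ((key M hM s).1 hs a ha)
    · intro h a ha
      exact h ha
end

section
/- Let β be a type and f : M →+ Multiset β an equifibered homomorphism of commutative additive monoids. Then f is injective, and there is a set B ⊆ β such that the range of f consists exactly of the multisets all of whose elements lie in B; in particular M is itself free, being additively isomorphic to Multiset ↥B. -/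
/-- An equifibered homomorphism `f : M →+ Multiset β` into a free commutative monoid is
injective, its range consists exactly of the multisets supported on some subset `B ⊆ β`, and
in particular `M` is itself free: `M ≃+ Multiset ↥B`. -/
theorem equifibered_into_free_is_free
    {M β : Type*} [AddCommMonoid M] (f : M →+ Multiset β) (hf : Equifibered f) :
    Function.Injective f ∧
    ∃ B : Set β,
      (∀ s : Multiset β, s ∈ Set.range f ↔ ∀ b ∈ s, b ∈ B) ∧
      Nonempty (M ≃+ Multiset ↥B) := by
  have hinj : Function.Injective f := by
    intro a b hab
    obtain ⟨p, _, hu⟩ := hf (f a) (f b) (a + b) (by rw [map_add])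
    have h1 := hu (a, b) ⟨rfl, rfl, rfl⟩
    have h2 := hu (b, a) ⟨hab.symm, hab, add_comm b a⟩
    exact congrArg Prod.fst (h1.trans h2.symm)
  refine ⟨hinj, ?_⟩
  set B : Set β := {b | ∃ m, f m = {b}} with hB
  have hrange : ∀ s : Multiset β, s ∈ Set.range f ↔ ∀ b ∈ s, b ∈ B := by
    intro s
    constructor
    · rintro ⟨m, rfl⟩ b hb
      obtain ⟨t, ht⟩ := Multiset.exists_cons_of_mem hb
      obtain ⟨p, hp, _⟩ := hf {b} t m (by rw [ht, Multiset.singleton_add])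
      exact ⟨p.1, hp.1⟩
    · intro hs
      induction s using Multiset.induction_on with
      | empty => exact ⟨0, map_zero f⟩
      | cons b t ih =>
        obtain ⟨mb, hmb⟩ := hs b (Multiset.mem_cons_self b t)
        obtain ⟨mt, hmt⟩ := ih (fun x hx => hs x (Multiset.mem_cons_of_mem hx))
        exact ⟨mb + mt, by rw [map_add, hmb, hmt, Multiset.singleton_add]⟩
  refine ⟨B, hrange, ?_⟩
  let g : Multiset B →+ Multiset β := Multiset.mapAddMonoidHom Subtype.val
  have hginj : Function.Injective g := Multiset.map_injective Subtype.val_injective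
  have hrangeg : ∀ s : Multiset β, s ∈ Set.range g ↔ ∀ b ∈ s, b ∈ B := by
    intro s
    constructor
    · rintro ⟨t, rfl⟩ b hb
      obtain ⟨x, _, rfl⟩ := Multiset.mem_map.mp hb
      exact x.2
    · intro hs
      refine ⟨s.attach.map (fun x => ⟨x.1, hs x.1 x.2⟩), ?_⟩
      show Multiset.map _ _ = s
      rw [Multiset.map_map]
      simp
  have hmr : AddMonoidHom.mrange f = AddMonoidHom.mrange g := by
    ext s
    rw [AddMonoidHom.mem_mrange, AddMonoidHom.mem_mrange]
    rw [show (∃ x, f x = s) ↔ s ∈ Set.range f from Iff.rfl, hrange s,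
      ← hrangeg s]
    rfl
  have e1 : M ≃+ AddMonoidHom.mrange f :=
    AddEquiv.ofBijective f.mrangeRestrict
      ⟨fun a b h => hinj (by simpa [Subtype.ext_iff] using h),
        f.mrangeRestrict_surjective⟩
  have e2 : Multiset B ≃+ AddMonoidHom.mrange g :=
    AddEquiv.ofBijective g.mrangeRestrict
      ⟨fun a b h => hginj (by simpa [Subtype.ext_iff] using h),
        g.mrangeRestrict_surjective⟩
  exact ⟨e1.trans ((AddEquiv.addSubmonoidCongr hmr).trans e2.symm)⟩
end
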